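/- Let F be a generalized fighting fish and let F = u·v be any factorization of F into two words. Suppose p·s is a prefix of v, where s is a single letter, such that every prefix q of p satisfies lat(u·q) ≥ lat(u) and long(u·q) ≥ long(u), but lat(u·p·s) < lat(u) or long(u·p·s) < long(u). Then either s = W, or s = S with lat(u·p) = lat(u) and long(u·p) = long(u). (In other words, the suffix walk v either remains in the tilted upper-right quarter plane with origin at the endpoint P of u, or first exits it through its upper side: by a W step, or by an S step taken at P itself.) -/

import Mathlib

/-!
`E` and `N` steps never leave the quarter plane, so the content is about an `S` step that follows
a quadrant excursion `p` ending on the lower side: such a `p` must end at the corner. This is a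
property of the whole word, proved by induction on the derivation of the fish. An excursion
containing both letters of the pair inserted by `∇_k` (`E`, `W`) or `△_k` (`N`, `S`) keeps its
endpoint, and stays an excursion, when they are deleted. One starting strictly inside the
inserted block begins with `N^m W` or `W^m S` and leaves the quadrant at once. If the exit step
is the inserted `S`, the excursion either contains the inserted `N`, and then ends above the
lower side, or is `W^m`, and then `m = 0`.
-/

/-- The four-letter alphabet of steps. -/
inductive Letter : Type
  | E | N | W | S
deriving DecidableEq, Repr

open Letter

/-- Fighting fish: words obtainable from `ENWS` by upper, lower and double gluings. -/
inductive IsFF : List Letter → Prop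
  | base : IsFF [E, N, W, S]
  | upper (u v : List Letter) :
      IsFF (u ++ [W] ++ v) → IsFF (u ++ [N, W, S] ++ v)
  | lower (u v : List Letter) :
      IsFF (u ++ [N] ++ v) → IsFF (u ++ [E, N, W] ++ v)
  | double (u v : List Letter) :
      IsFF (u ++ [W, N] ++ v) → IsFF (u ++ [N, W] ++ v)

/-- Generalized fighting fish: words obtainable from the empty word by the
operations `∇_k` (replace `N^k` by `E N^k W`) and `△_k` (replace `W^k` by `N W^k S`),
for `k ≥ 0`. -/
inductive IsGFF : List Letter → Prop
  | base : IsGFF []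
  | nabla (u v : List Letter) (k : ℕ) :
      IsGFF (u ++ List.replicate k N ++ v) →
      IsGFF (u ++ [E] ++ List.replicate k N ++ [W] ++ v)
  | delta (u v : List Letter) (k : ℕ) :
      IsGFF (u ++ List.replicate k W ++ v) →
      IsGFF (u ++ [N] ++ List.replicate k W ++ [S] ++ v)

/-- The latitude of a word: number of `N`'s minus number of `S`'s. -/
def lat (w : List Letter) : ℤ := (w.count N : ℤ) - (w.count S : ℤ)

/-- The longitude of a word: number of `E`'s minus number of `W`'s. -/
def long (w : List Letter) : ℤ := (w.count E : ℤ) - (w.count W : ℤ)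

/-- The size of a word: half its length. -/
def size (w : List Letter) : ℕ := w.length / 2

@[simp] lemma lat_nil : lat [] = 0 := rfl

@[simp] lemma long_nil : long [] = 0 := rfl

@[simp] lemma lat_append (a b : List Letter) : lat (a ++ b) = lat a + lat b := by
  simp only [lat, List.count_append]; push_cast; ring

@[simp] lemma long_append (a b : List Letter) : long (a ++ b) = long a + long b := by
  simp only [long, List.count_append]; push_cast; ring

@[simp] lemma lat_cons (x : Letter) (w : List Letter) :
    lat (x :: w) = (match x with | N => 1 | S => -1 | _ => 0) + lat w := by
  rw [← List.singleton_append, lat_append]; cases x <;> rfl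

@[simp] lemma long_cons (x : Letter) (w : List Letter) :
    long (x :: w) = (match x with | E => 1 | W => -1 | _ => 0) + long w := by
  rw [← List.singleton_append, long_append]; cases x <;> rfl

@[simp] lemma lat_replicate (k : ℕ) (x : Letter) : lat (List.replicate k x) = k * lat [x] := by
  cases x <;> simp [lat, List.count_replicate]

@[simp] lemma long_replicate (k : ℕ) (x : Letter) :
    long (List.replicate k x) = k * long [x] := by
  cases x <;> simp [long, List.count_replicate]

namespace List

variable {α : Type*}

lemma prefix_append_cases {q a b : List α} (h : q <+: a ++ b) :
    q <+: a ∨ ∃ r, r <+: b ∧ q = a ++ r := by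
  obtain ⟨t, ht⟩ := h
  rcases append_eq_append_iff.mp ht with ⟨r, rfl, -⟩ | ⟨r, rfl, hb⟩
  · exact Or.inl (prefix_append q r)
  · exact Or.inr ⟨r, ⟨t, hb.symm⟩, rfl⟩

lemma append_eq_append_cases {ws xs ys zs : List α} (h : ws ++ xs = ys ++ zs) :
    (∃ as, ys = ws ++ as ∧ xs = as ++ zs) ∨ ∃ b bs, ws = ys ++ b :: bs ∧ zs = b :: bs ++ xs := by
  rcases append_eq_append_iff.mp h with h | ⟨_ | ⟨b, bs⟩, rfl, rfl⟩
  · exact Or.inl h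
  · exact Or.inl ⟨[], by simp, rfl⟩
  · exact Or.inr ⟨b, bs, rfl, rfl⟩

lemma eq_append_cons_of_not_mem {u m v z y : List α} {s : α} (hs : s ∉ m)
    (h : u ++ m ++ v = z ++ s :: y) :
    (∃ y₀, u = z ++ s :: y₀) ∨ ∃ t, z = u ++ m ++ t ∧ v = t ++ s :: y := by
  rcases append_eq_append_cases h with ⟨t, rfl, hv⟩ | ⟨b, bs, hum, hy⟩
  · exact Or.inr ⟨t, rfl, hv⟩
  rw [cons_append, cons_eq_cons] at hy
  obtain ⟨rfl, -⟩ := hy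
  rcases append_eq_append_cases hum with ⟨_, -, hm⟩ | ⟨c, cs, rfl, hcs⟩
  · exact absurd (hm ▸ mem_append_right _ mem_cons_self) hs
  · rw [cons_append, cons_eq_cons] at hcs
    exact Or.inl ⟨cs, hcs.1 ▸ rfl⟩

lemma cons_append_eq_cons_append_cons {a b d : α} {B t ds p : List α}
    (h : d :: ds ++ p = a :: (B ++ b :: t)) :
    (∃ B₁ B₂, B = B₁ ++ B₂ ∧ p = B₂ ++ b :: t) ∨ ∃ t₁, ds = B ++ b :: t₁ ∧ t = t₁ ++ p := by
  rw [cons_append, cons_eq_cons] at h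
  rcases append_eq_append_cases h.2 with ⟨bs, rfl, hp⟩ | ⟨e, es, rfl, hBt⟩
  · exact Or.inl ⟨ds, bs, rfl, hp⟩
  · rw [cons_append, cons_eq_cons] at hBt
    exact Or.inr ⟨es, hBt.1 ▸ rfl, hBt.2⟩

end List

open List (replicate)

def InQuadrant (p : List Letter) : Prop := ∀ q, q <+: p → 0 ≤ lat q ∧ 0 ≤ long q

namespace InQuadrant

variable {c t : List Letter} {k : ℕ}

lemma erase_east_west (h : InQuadrant (c ++ E :: (replicate k N ++ W :: t))) :
    InQuadrant (c ++ replicate k N ++ t) := by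
  intro q hq
  rw [List.append_assoc] at hq
  rcases List.prefix_append_cases hq with hqc | ⟨r, hr, rfl⟩
  · exact h q (hqc.trans (List.prefix_append _ _))
  rcases List.prefix_append_cases hr with hrN | ⟨t₁, ht₁, rfl⟩
  · have hc := h c (List.prefix_append _ _)
    rw [(List.prefix_replicate_iff.mp hrN).2]
    simp only [lat_append, long_append, lat_replicate, long_replicate, lat_cons, long_cons,
      lat_nil, long_nil]
    constructor <;> linarith
  · have := h (c ++ E :: (replicate k N ++ W :: t₁)) (by simpa using ht₁)
    simp only [lat_append, long_append, lat_replicate, long_replicate, lat_cons, long_cons,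
      lat_nil, long_nil] at this ⊢
    constructor <;> linarith

lemma erase_north_south (h : InQuadrant (c ++ N :: (replicate k W ++ S :: t))) :
    InQuadrant (c ++ replicate k W ++ t) := by
  intro q hq
  rw [List.append_assoc] at hq
  rcases List.prefix_append_cases hq with hqc | ⟨r, hr, rfl⟩
  · exact h q (hqc.trans (List.prefix_append _ _))
  rcases List.prefix_append_cases hr with hrW | ⟨t₁, ht₁, rfl⟩
  · have hc := h c (List.prefix_append _ _)
    have hcr := h (c ++ N :: r) (by simpa using hrW.trans (List.prefix_append _ _))
    rw [(List.prefix_replicate_iff.mp hrW).2] at hcr ⊢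
    simp only [lat_append, long_append, lat_replicate, long_replicate, lat_cons, long_cons,
      lat_nil, long_nil] at hcr ⊢
    constructor <;> linarith
  · have := h (c ++ N :: (replicate k W ++ S :: t₁)) (by simpa using ht₁)
    simp only [lat_append, long_append, lat_replicate, long_replicate, lat_cons, long_cons,
      lat_nil, long_nil] at this ⊢
    constructor <;> linarith

end InQuadrant

def ExitsSouthOnlyAtCorner (w : List Letter) : Prop :=
  ∀ x p y, w = x ++ p ++ S :: y → InQuadrant p → lat p = 0 → long p = 0

namespace ExitsSouthOnlyAtCorner

variable {u v : List Letter} {k : ℕ}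

lemma nil : ExitsSouthOnlyAtCorner [] := by
  intro x p y h
  simp at h

lemma nabla (h : ExitsSouthOnlyAtCorner (u ++ replicate k N ++ v)) :
    ExitsSouthOnlyAtCorner (u ++ [E] ++ replicate k N ++ [W] ++ v) := by
  intro x p y heq hp hlat
  have heq' : u ++ E :: (replicate k N ++ [W]) ++ v = x ++ p ++ S :: y := by simpa using heq
  rcases List.eq_append_cons_of_not_mem (by simp) heq' with ⟨y₀, rfl⟩ | ⟨t, hxp, rfl⟩
  · exact h x p (y₀ ++ replicate k N ++ v) (by simp) hp hlat
  have hxp' : x ++ p = u ++ E :: (replicate k N ++ W :: t) := by simpa using hxp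
  rcases List.append_eq_append_cases hxp' with ⟨c, rfl, rfl⟩ | ⟨d, ds, rfl, hd⟩
  · simpa using
      h x (c ++ replicate k N ++ t) y (by simp) hp.erase_east_west (by simpa using hlat)
  rcases List.cons_append_eq_cons_append_cons hd.symm with ⟨_, B₂, hB, rfl⟩ | ⟨t₁, rfl, rfl⟩
  · have hW := (hp (B₂ ++ [W]) (by simp)).2
    rw [(List.replicate_eq_append_iff.mp hB).2.2] at hW
    simp at hW
  · exact h (u ++ replicate k N ++ t₁) p y (by simp) hp hlat

lemma delta (h : ExitsSouthOnlyAtCorner (u ++ replicate k W ++ v)) :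
    ExitsSouthOnlyAtCorner (u ++ [N] ++ replicate k W ++ [S] ++ v) := by
  intro x p y heq hp hlat
  have heq' : u ++ N :: replicate k W ++ S :: v = x ++ p ++ S :: y := by simpa using heq
  rcases List.eq_append_cons_of_not_mem (by simp) heq' with ⟨y₀, rfl⟩ | ⟨t, hxp, hv⟩
  · exact h x p (y₀ ++ replicate k W ++ v) (by simp) hp hlat
  rcases List.cons_eq_append_iff.mp hv with ⟨rfl, -⟩ | ⟨t', rfl, rfl⟩
  · rw [List.append_nil] at hxp
    rcases List.append_eq_append_cases hxp with ⟨c, -, rfl⟩ | ⟨d, ds, -, hd⟩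
    · have hc := (hp c (List.prefix_append _ _)).1
      simp only [lat_append, lat_cons, lat_nil, lat_replicate] at hlat
      linarith
    · rw [List.cons_append, List.cons_eq_cons] at hd
      have hlong : long p = -p.length := by
        rw [(List.replicate_eq_append_iff.mp hd.2).2.2]; simp
      have := (hp p List.prefix_rfl).2
      omega
  have hxp' : x ++ p = u ++ N :: (replicate k W ++ S :: t') := by simpa using hxp
  rcases List.append_eq_append_cases hxp' with ⟨c, rfl, rfl⟩ | ⟨d, ds, rfl, hd⟩
  · simpa using
      h x (c ++ replicate k W ++ t') y (by simp) hp.erase_north_south (by simpa using hlat)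
  rcases List.cons_append_eq_cons_append_cons hd.symm with ⟨_, B₂, hB, rfl⟩ | ⟨t₁, rfl, rfl⟩
  · have hS := (hp (B₂ ++ [S]) (by simp)).1
    rw [(List.replicate_eq_append_iff.mp hB).2.2] at hS
    simp at hS
  · exact h (u ++ replicate k W ++ t₁) p y (by simp) hp hlat

end ExitsSouthOnlyAtCorner

lemma IsGFF.exitsSouthOnlyAtCorner {w : List Letter} (hw : IsGFF w) : ExitsSouthOnlyAtCorner w := by
  induction hw with
  | base => exact .nil
  | nabla _ _ _ _ ih => exact ih.nabla
  | delta _ _ _ _ ih => exact ih.delta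

/-- Quadrant property for a factorization `F = u · v` of a generalized fighting
fish: if `p · s` is a prefix of `v` (with `s` a single letter) which is the first
exit of the walk `v` from the tilted upper-right quarter plane with origin at the
endpoint of `u`, then either `s = W`, or `s = S` taken at the origin point itself. -/
theorem gff_exit_upper_side (u v p : List Letter) (s : Letter)
    (hF : IsGFF (u ++ v)) (hpre : (p ++ [s]) <+: v)
    (hin : ∀ q : List Letter, q <+: p →
      lat u ≤ lat (u ++ q) ∧ long u ≤ long (u ++ q))
    (hout : lat (u ++ p ++ [s]) < lat u ∨ long (u ++ p ++ [s]) < long u) :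
    s = W ∨ (s = S ∧ lat (u ++ p) = lat u ∧ long (u ++ p) = long u) := by
  have hp : InQuadrant p := fun q hq => by
    simpa using hin q hq
  obtain ⟨hlat₀, hlong₀⟩ := hp p List.prefix_rfl
  simp only [lat_append, long_append] at hout
  cases s with
  | W => exact Or.inl rfl
  | S =>
    have hlat : lat p = 0 := by simp only [lat_cons, long_cons, lat_nil, long_nil] at hout; omega
    obtain ⟨y, rfl⟩ := hpre
    have hlong := hF.exitsSouthOnlyAtCorner u p y (by simp) hp hlat
    exact Or.inr ⟨rfl, by simp [hlat], by simp [hlong]⟩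
  | E | N => simp only [lat_cons, long_cons, lat_nil, long_nil] at hout; omega
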